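/- Maximum principle for the Becker-Döring tail density: Let (c_i(t))_{i≥1} be a solution to the Becker-Döring equations with non-negative initial datum, assume the coefficient hypotheses (H1)–(H3), and assume the density of the solution satisfies 0 < ρ < ρ_s. Denote by (G_j(t))_{j≥1} the tail density of the solution. Let ω > 0 and 0 ≤ t₀ < t₁, and assume c_1(t) ≤ ω for all t ∈ [t₀, t₁]. Let (r_j)_{j≥1} be an (ω,ρ)-supersolution to the associated Becker-Döring equations. If G_j(t₀) ≤ r_j for all j ≥ 1, then G_j(t) ≤ r_j for all t ∈ [t₀, t₁] and all j ≥ 1. -/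

import Mathlib

/-!
STATEMENT 7: Maximum principle for the Becker–Döring tail density.

Sequences are indexed by `ℕ`; the physically relevant entries are those of
index `i ≥ 1` (index `0` is unused).  The critical density is handled in
`[0,∞]`.
-/

open Filter Set
open scoped Topology ENNReal

/-- Hypothesis (H1): either `0 < a_i ≤ ā i^γ` for all `i ≥ 1`, some `ā > 0`
and some `0 ≤ γ < 1`, or `C₁ i ≤ a_i ≤ C₂ i` for all `i ≥ 1` and some
`0 < C₁ ≤ C₂`. -/
def BDH1 (a : ℕ → ℝ) (γ : ℝ) : Prop :=
  (0 ≤ γ ∧ γ < 1 ∧ ∃ abar : ℝ, 0 < abar ∧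
      ∀ i : ℕ, 1 ≤ i → a i ≤ abar * (i : ℝ) ^ γ) ∨
  (γ = 1 ∧ ∃ C₁ C₂ : ℝ, 0 < C₁ ∧ C₁ ≤ C₂ ∧
      ∀ i : ℕ, 1 ≤ i → C₁ * (i : ℝ) ≤ a i ∧ a i ≤ C₂ * (i : ℝ))

/-- A solution of the Becker–Döring equations on `[0,∞)` with coagulation
coefficients `a` and fragmentation coefficients `b`. -/
structure IsBDSolution (a b : ℕ → ℝ) (c : ℕ → ℝ → ℝ) : Prop where
  nonneg : ∀ i : ℕ, 1 ≤ i → ∀ t : ℝ, 0 ≤ t → 0 ≤ c i t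
  densSummable : ∀ t : ℝ, 0 ≤ t →
    Summable fun i : ℕ => ((i : ℝ) + 1) * c (i + 1) t
  densConst : ∀ t : ℝ, 0 ≤ t →
    ∑' i : ℕ, ((i : ℝ) + 1) * c (i + 1) t
      = ∑' i : ℕ, ((i : ℝ) + 1) * c (i + 1) 0
  Wsummable : ∀ t : ℝ, 0 ≤ t → Summable fun k : ℕ =>
    a (k + 1) * c 1 t * c (k + 1) t - b (k + 2) * c (k + 2) t
  ode : ∀ i : ℕ, 2 ≤ i → ∀ t : ℝ, 0 ≤ t →
    HasDerivWithinAt (c i)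
      ((a (i - 1) * c 1 t * c (i - 1) t - b i * c i t)
        - (a i * c 1 t * c i t - b (i + 1) * c (i + 1) t)) (Set.Ici 0) t
  ode1 : ∀ t : ℝ, 0 ≤ t →
    HasDerivWithinAt (c 1)
      (-(a 1 * c 1 t * c 1 t - b 2 * c 2 t)
        - ∑' k : ℕ, (a (k + 1) * c 1 t * c (k + 1) t - b (k + 2) * c (k + 2) t))
      (Set.Ici 0) t

/-- The tail density `G_j(t) = ∑_{i ≥ j} c_i(t)`. -/
noncomputable def tailDensity (c : ℕ → ℝ → ℝ) (j : ℕ) (t : ℝ) : ℝ :=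
  ∑' i : ℕ, c (j + i) t

/-- An `(ω,ρ)`-supersolution of the associated Becker–Döring equations: a
non-negative sequence `(r_j)_{j ≥ 1}` with `r_1 ≥ ρ` and
`a_{j-1} ω (r_{j-1} - r_j) + b_j (r_{j+1} - r_j) ≤ 0` for all `j ≥ 2`. -/
def IsSupersolution (a b : ℕ → ℝ) (ω ρ : ℝ) (r : ℕ → ℝ) : Prop :=
  (∀ j : ℕ, 1 ≤ j → 0 ≤ r j) ∧ ρ ≤ r 1 ∧
    ∀ j : ℕ, 2 ≤ j →
      a (j - 1) * ω * (r (j - 1) - r j) + b j * (r (j + 1) - r j) ≤ 0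

/-!
Write `u_j = G_j - r_j`. The tails satisfy `G_j' = W_{j-1}`, and on `[t₀, t₁]` the bound
`c_1 ≤ ω` together with the supersolution inequality gives
`W_{j-1} ≤ a_{j-1} ω (u_{j-1} - u_j) + b_j (u_{j+1} - u_j)`, so `u_j` cannot grow at a time and
an index where it is maximal in `j`. To make this rigorous, perturb by `ε (t - t₀ + 1)` and look
at the first time some `u_j` reaches the perturbation: only finitely many `j` can do so because
`j G_j ≤ ρ`, and `j = 1` never does because `G_1 ≤ ρ ≤ r_1`. At that time the perturbed `u_j`
has derivative at most `-ε`, yet it has just risen to `0`.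

The identity `G_j' = W_{j-1}` comes from summing the equations for `c_i`, `i ≥ j`, in integrated
form and passing to the limit, which is justified by `∑_k |W_k| ≲ ρ` under linear growth of the
coefficients.
-/
theorem HasDerivWithinAt.nonneg_of_le_left {f : ℝ → ℝ} {f' a b : ℝ}
    (hf : HasDerivWithinAt f f' (Iio b) b) (hab : a < b) (hle : ∀ s ∈ Ioo a b, f s ≤ f b) :
    0 ≤ f' := by
  rw [hasDerivWithinAt_iff_tendsto_slope' self_notMem_Iio] at hf
  refine ge_of_tendsto hf ?_
  filter_upwards [Ioo_mem_nhdsLT hab] with s hs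
  rw [slope_def_field]
  exact div_nonneg_of_nonpos (sub_nonpos.2 (hle s hs)) (sub_nonpos.2 hs.2.le)

theorem exists_first_zero_of_continuousOn {ι : Type*} {s : Finset ι} {f : ι → ℝ → ℝ}
    {t₀ t₁ : ℝ} (hf : ∀ i ∈ s, ContinuousOn (f i) (Icc t₀ t₁)) (h₀ : ∀ i ∈ s, f i t₀ < 0)
    (hex : ∃ i ∈ s, ∃ t ∈ Icc t₀ t₁, 0 ≤ f i t) :
    ∃ T ∈ Ioc t₀ t₁, (∀ i ∈ s, ∀ t ∈ Ico t₀ T, f i t < 0) ∧ (∀ i ∈ s, f i T ≤ 0) ∧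
      ∃ i ∈ s, f i T = 0 := by
  set B := ⋃ i ∈ s, Icc t₀ t₁ ∩ f i ⁻¹' Ici 0
  have hB : IsClosed B := isClosed_biUnion_finset fun i hi =>
    (hf i hi).preimage_isClosed_of_isClosed isClosed_Icc isClosed_Ici
  have hBsub : B ⊆ Icc t₀ t₁ := iUnion₂_subset fun _ _ => inter_subset_left
  have hBne : B.Nonempty := by
    obtain ⟨i, hi, t, ht, h⟩ := hex
    exact ⟨t, mem_biUnion hi ⟨ht, h⟩⟩
  have hBbdd : BddBelow B := ⟨t₀, fun t ht => (hBsub ht).1⟩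
  obtain ⟨i, hi, hTI, hiT⟩ := mem_iUnion₂.1 (hB.csInf_mem hBne hBbdd)
  set T := sInf B
  have hbefore : ∀ j ∈ s, ∀ t ∈ Ico t₀ T, f j t < 0 := fun j hj t ht => by
    by_contra! h
    exact (csInf_le hBbdd (mem_biUnion hj ⟨⟨ht.1, ht.2.le.trans hTI.2⟩, h⟩)).not_gt ht.2
  have hT₀ : t₀ < T := hTI.1.lt_of_ne fun h => (h₀ i hi).not_ge (h ▸ hiT)
  have hatT : ∀ j ∈ s, f j T ≤ 0 := fun j hj => by
    have hcont : ContinuousWithinAt (f j) (Ico t₀ T) T :=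
      (hf j hj T hTI).mono fun t ht => ⟨ht.1, ht.2.le.trans hTI.2⟩
    have : (𝓝[Ico t₀ T] T).NeBot := right_nhdsWithin_Ico_neBot hT₀
    exact le_of_tendsto hcont (eventually_nhdsWithin_of_forall fun t ht => (hbefore j hj t ht).le)
  exact ⟨T, ⟨hT₀, hTI.2⟩, hbefore, hatT, i, hi, le_antisymm (hatT i hi) hiT⟩

section LatticeMaximumPrinciple

variable {u d : ℕ → ℝ → ℝ} {t₀ t₁ K : ℝ}

theorem lattice_maximum_principle_strict (hinit : ∀ j, 1 ≤ j → u j t₀ ≤ 0)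
    (hbdry : ∀ t ∈ Icc t₀ t₁, u 1 t ≤ 0)
    (hdecay : ∀ j, 1 ≤ j → ∀ t ∈ Icc t₀ t₁, j * u j t ≤ K)
    (hcont : ∀ j, 2 ≤ j → ContinuousOn (u j) (Icc t₀ t₁))
    (hderiv : ∀ j, 2 ≤ j → ∀ t ∈ Ioc t₀ t₁, HasDerivWithinAt (u j) (d j t) (Iio t) t)
    (hmax : ∀ j, 2 ≤ j → ∀ t ∈ Ioc t₀ t₁, u (j - 1) t ≤ u j t → u (j + 1) t ≤ u j t → d j t ≤ 0)
    {ε : ℝ} (hε : 0 < ε) : ∀ t ∈ Icc t₀ t₁, ∀ j, 1 ≤ j → u j t < ε * (t - t₀ + 1) := by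
  intro t ht j hj
  by_contra! hbad
  set v : ℕ → ℝ → ℝ := fun j t => u j t - ε * (t - t₀ + 1)
  have hrange : ∀ t ∈ Icc t₀ t₁, ∀ j, 1 ≤ j → 0 ≤ v j t → j ∈ Finset.Icc 2 ⌈K / ε⌉₊ := by
    intro t ht j hj hvt
    have hεu : ε ≤ u j t := by nlinarith [ht.1]
    refine Finset.mem_Icc.2 ⟨?_, ?_⟩
    · by_contra! h
      obtain rfl : j = 1 := by omega
      linarith [hbdry t ht]
    · have : (j : ℝ) * ε ≤ K :=
        (mul_le_mul_of_nonneg_left hεu (Nat.cast_nonneg j)).trans (hdecay j hj t ht)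
      exact_mod_cast ((le_div_iff₀ hε).2 this).trans (Nat.le_ceil _)
  obtain ⟨T, hT, hbefore, hatT, i, hi, hiT⟩ :=
    exists_first_zero_of_continuousOn (s := Finset.Icc 2 ⌈K / ε⌉₊) (f := v)
      (fun j hj => (hcont j (Finset.mem_Icc.1 hj).1).sub (by fun_prop))
      (fun j hj => by linarith [hinit j (by linarith [(Finset.mem_Icc.1 hj).1])])
      ⟨j, hrange t ht j hj (by linarith), t, ht, by linarith⟩
  have hneg : ∀ j, 1 ≤ j → v j T ≤ 0 := fun j hj => by
    by_contra! h
    exact (hatT j (hrange T (Ioc_subset_Icc_self hT) j hj h.le)).not_gt h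
  have hi2 : 2 ≤ i := (Finset.mem_Icc.1 hi).1
  have hslope : 0 ≤ d i T - ε := by
    have hpert : HasDerivWithinAt (fun t => ε * (t - t₀ + 1)) ε (Iio T) T := by
      simpa using (((hasDerivWithinAt_id T _).sub_const t₀).add_const 1).const_mul ε
    exact ((hderiv i hi2 T hT).sub hpert).nonneg_of_le_left hT.1 fun s hs =>
      (hbefore i hi s ⟨hs.1.le, hs.2⟩).le.trans hiT.ge
  have hflux : d i T ≤ 0 := hmax i hi2 T hT (by linarith [hneg (i - 1) (by omega)])
    (by linarith [hneg (i + 1) (by omega)])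
  linarith

theorem lattice_maximum_principle (hinit : ∀ j, 1 ≤ j → u j t₀ ≤ 0)
    (hbdry : ∀ t ∈ Icc t₀ t₁, u 1 t ≤ 0)
    (hdecay : ∀ j, 1 ≤ j → ∀ t ∈ Icc t₀ t₁, j * u j t ≤ K)
    (hcont : ∀ j, 2 ≤ j → ContinuousOn (u j) (Icc t₀ t₁))
    (hderiv : ∀ j, 2 ≤ j → ∀ t ∈ Ioc t₀ t₁, HasDerivWithinAt (u j) (d j t) (Iio t) t)
    (hmax : ∀ j, 2 ≤ j → ∀ t ∈ Ioc t₀ t₁, u (j - 1) t ≤ u j t → u (j + 1) t ≤ u j t → d j t ≤ 0) :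
    ∀ t ∈ Icc t₀ t₁, ∀ j, 1 ≤ j → u j t ≤ 0 := by
  intro t ht j hj
  by_contra! hpos
  have hC : 0 < t - t₀ + 1 := by linarith [ht.1]
  have := lattice_maximum_principle_strict hinit hbdry hdecay hcont hderiv hmax
    (div_pos hpos hC) t ht j hj
  rw [div_mul_cancel₀ _ hC.ne'] at this
  exact lt_irrefl _ this

end LatticeMaximumPrinciple

/-- The paper's `W_k`. -/
def bdFlux (a b : ℕ → ℝ) (c : ℕ → ℝ → ℝ) (k : ℕ) (t : ℝ) : ℝ :=
  a k * c 1 t * c k t - b (k + 1) * c (k + 1) t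

noncomputable def bdDensity (c : ℕ → ℝ → ℝ) (t : ℝ) : ℝ :=
  ∑' i : ℕ, ((i : ℝ) + 1) * c (i + 1) t

namespace IsBDSolution

variable {a b : ℕ → ℝ} {c : ℕ → ℝ → ℝ} {t : ℝ} {j : ℕ}

theorem sum_range_mul_le_bdDensity (hsol : IsBDSolution a b c) (ht : 0 ≤ t) (hj : 1 ≤ j)
    (n : ℕ) : ∑ k ∈ Finset.range n, ((j + k : ℕ) : ℝ) * c (j + k) t ≤ bdDensity c 0 := by
  obtain ⟨m, rfl⟩ : ∃ m, j = m + 1 := ⟨j - 1, by omega⟩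
  set f : ℕ → ℝ := fun i => ((i : ℝ) + 1) * c (i + 1) t
  have hf : ∀ i, 0 ≤ f i := fun i => mul_nonneg (by positivity) (hsol.nonneg _ (by omega) t ht)
  calc ∑ k ∈ Finset.range n, ((m + 1 + k : ℕ) : ℝ) * c (m + 1 + k) t
      = ∑ k ∈ Finset.range n, f (m + k) := by
        refine Finset.sum_congr rfl fun k _ => ?_
        rw [add_right_comm]
        simp only [f]
        push_cast
        ring
    _ ≤ ∑ i ∈ Finset.range (m + n), f i := by
        rw [Finset.sum_range_add]
        exact le_add_of_nonneg_left (Finset.sum_nonneg fun i _ => hf i)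
    _ ≤ bdDensity c t := (hsol.densSummable t ht).sum_le_tsum _ fun i _ => hf i
    _ = bdDensity c 0 := hsol.densConst t ht

theorem summable_tail (hsol : IsBDSolution a b c) (ht : 0 ≤ t) (hj : 1 ≤ j) :
    Summable fun i => c (j + i) t :=
  summable_of_sum_range_le (fun i => hsol.nonneg _ (by omega) t ht) fun n =>
    (Finset.sum_le_sum fun k _ => le_mul_of_one_le_left (hsol.nonneg _ (by omega) t ht)
      (by norm_cast; omega)).trans (hsol.sum_range_mul_le_bdDensity ht hj n)

theorem mul_tailDensity_le (hsol : IsBDSolution a b c) (ht : 0 ≤ t) (hj : 1 ≤ j) :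
    j * tailDensity c j t ≤ bdDensity c 0 := by
  rw [tailDensity, ← tsum_mul_left]
  refine Real.tsum_le_of_sum_range_le
    (fun k => mul_nonneg (Nat.cast_nonneg j) (hsol.nonneg _ (by omega) t ht)) fun n =>
    (Finset.sum_le_sum fun k _ => ?_).trans (hsol.sum_range_mul_le_bdDensity ht hj n)
  exact mul_le_mul_of_nonneg_right (by norm_cast; omega) (hsol.nonneg _ (by omega) t ht)

theorem tailDensity_eq_add (hsol : IsBDSolution a b c) (ht : 0 ≤ t) (hj : 1 ≤ j) :
    tailDensity c j t = c j t + tailDensity c (j + 1) t := by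
  rw [tailDensity, (hsol.summable_tail ht hj).tsum_eq_zero_add]
  simp only [add_zero, tailDensity, add_right_comm j 1]
  rfl

theorem continuousOn (hsol : IsBDSolution a b c) {i : ℕ} (hi : 1 ≤ i) :
    ContinuousOn (c i) (Ici 0) := fun t ht => by
  obtain rfl | hi := hi.eq_or_lt
  · exact (hsol.ode1 t ht).continuousWithinAt
  · exact (hsol.ode i hi t ht).continuousWithinAt

theorem continuousOn_bdFlux (hsol : IsBDSolution a b c) {k : ℕ} (hk : 1 ≤ k) :
    ContinuousOn (bdFlux a b c k) (Ici 0) :=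
  ((continuousOn_const.mul (hsol.continuousOn le_rfl)).mul (hsol.continuousOn hk)).sub
    (continuousOn_const.mul (hsol.continuousOn (by omega)))

theorem hasDerivWithinAt_succ (hsol : IsBDSolution a b c) {k : ℕ} (hk : 1 ≤ k) (ht : 0 ≤ t) :
    HasDerivWithinAt (c (k + 1)) (bdFlux a b c k t - bdFlux a b c (k + 1) t) (Ici 0) t := by
  simpa [bdFlux] using hsol.ode (k + 1) (by omega) t ht

theorem hasDerivWithinAt_sum_range (hsol : IsBDSolution a b c) (hj : 1 ≤ j) (ht : 0 ≤ t)
    (N : ℕ) :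
    HasDerivWithinAt (fun u => ∑ i ∈ Finset.range N, c (j + i + 1) u)
      (bdFlux a b c j t - bdFlux a b c (j + N) t) (Ici 0) t := by
  have := HasDerivWithinAt.fun_sum (u := Finset.range N)
    fun i _ => hsol.hasDerivWithinAt_succ (k := j + i) (by omega) ht
  have htelescope := Finset.sum_range_sub' (fun i => bdFlux a b c (j + i) t) N
  simp only [add_zero, ← add_assoc] at htelescope
  rwa [htelescope] at this

end IsBDSolution

namespace IsBDSolution

variable {a b : ℕ → ℝ} {c : ℕ → ℝ → ℝ} {t : ℝ} {j : ℕ} {A B : ℝ}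

theorem abs_bdFlux_le (hsol : IsBDSolution a b c) (ha : ∀ i, 1 ≤ i → |a i| ≤ A * i)
    (hb : ∀ i, 2 ≤ i → |b i| ≤ B * i) {k : ℕ} (hk : 1 ≤ k) (ht : 0 ≤ t) {ω : ℝ}
    (hc1 : |c 1 t| ≤ ω) :
    |bdFlux a b c k t| ≤ A * ω * (k * c k t) + B * ((k + 1 : ℕ) * c (k + 1) t) := by
  have hck := hsol.nonneg k hk t ht
  have hck' := hsol.nonneg (k + 1) (by omega) t ht
  calc |bdFlux a b c k t| ≤ |a k| * |c 1 t| * c k t + |b (k + 1)| * c (k + 1) t := by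
        refine (abs_sub _ _).trans_eq ?_
        rw [abs_mul, abs_mul, abs_mul, abs_of_nonneg hck, abs_of_nonneg hck']
    _ ≤ (A * k) * ω * c k t + (B * (k + 1 : ℕ)) * c (k + 1) t := by
        have := (abs_nonneg _).trans (ha k hk)
        gcongr
        exacts [ha k hk, hb (k + 1) (by omega)]
    _ = _ := by ring

theorem sum_range_abs_bdFlux_le (hsol : IsBDSolution a b c) (ha : ∀ i, 1 ≤ i → |a i| ≤ A * i)
    (hb : ∀ i, 2 ≤ i → |b i| ≤ B * i) (hj : 1 ≤ j) (ht : 0 ≤ t) {ω : ℝ} (hc1 : |c 1 t| ≤ ω)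
    (n : ℕ) :
    ∑ N ∈ Finset.range n, |bdFlux a b c (j + N) t| ≤ (A * ω + B) * bdDensity c 0 := by
  have hA : 0 ≤ A := by simpa using (abs_nonneg _).trans (ha 1 le_rfl)
  have hB : 0 ≤ B := by
    have := (abs_nonneg _).trans (hb 2 le_rfl)
    push_cast at this
    linarith
  have hω : 0 ≤ ω := (abs_nonneg _).trans hc1
  calc ∑ N ∈ Finset.range n, |bdFlux a b c (j + N) t|
      ≤ ∑ N ∈ Finset.range n, (A * ω * ((j + N : ℕ) * c (j + N) t)
          + B * ((j + 1 + N : ℕ) * c (j + 1 + N) t)) :=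
        Finset.sum_le_sum fun N _ => by
          simpa only [add_right_comm j 1 N] using hsol.abs_bdFlux_le ha hb (by omega) ht hc1
    _ = A * ω * ∑ N ∈ Finset.range n, ((j + N : ℕ) : ℝ) * c (j + N) t
          + B * ∑ N ∈ Finset.range n, ((j + 1 + N : ℕ) : ℝ) * c (j + 1 + N) t := by
        rw [Finset.sum_add_distrib, Finset.mul_sum, Finset.mul_sum]
    _ ≤ A * ω * bdDensity c 0 + B * bdDensity c 0 := by
        gcongr
        exacts [hsol.sum_range_mul_le_bdDensity ht hj n,
          hsol.sum_range_mul_le_bdDensity ht (by omega) n]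
    _ = (A * ω + B) * bdDensity c 0 := by ring

theorem tendsto_integral_bdFlux (hsol : IsBDSolution a b c) (ha : ∀ i, 1 ≤ i → |a i| ≤ A * i)
    (hb : ∀ i, 2 ≤ i → |b i| ≤ B * i) (hj : 1 ≤ j) {t' : ℝ} (ht' : 0 ≤ t') (htt : t' ≤ t) :
    Tendsto (fun N => ∫ s in t'..t, bdFlux a b c (j + N) s) atTop (𝓝 0) := by
  have hI : uIcc t' t ⊆ Ici 0 := fun s hs => ht'.trans (uIcc_of_le htt ▸ hs).1
  obtain ⟨ω, hω⟩ := isCompact_uIcc.exists_bound_of_continuousOn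
    ((hsol.continuousOn le_rfl).mono hI)
  have hcont : ∀ N, ContinuousOn (fun s => |bdFlux a b c (j + N) s|) (uIcc t' t) := fun N =>
    ((hsol.continuousOn_bdFlux (by omega)).mono hI).abs
  have hsum : Summable fun N => ∫ s in t'..t, |bdFlux a b c (j + N) s| := by
    refine summable_of_sum_range_le (c := (t - t') * ((A * ω + B) * bdDensity c 0))
      (fun N => intervalIntegral.integral_nonneg htt fun s _ => abs_nonneg _) fun n => ?_
    rw [← intervalIntegral.integral_finsetSum fun N _ => (hcont N).intervalIntegrable]
    calc _ ≤ ∫ _ in t'..t, (A * ω + B) * bdDensity c 0 :=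
          intervalIntegral.integral_mono_on htt
            (continuousOn_finsetSum _ fun N _ => hcont N).intervalIntegrable
            intervalIntegrable_const fun s hs =>
              hsol.sum_range_abs_bdFlux_le ha hb hj (hI (Icc_subset_uIcc hs))
                (hω s (Icc_subset_uIcc hs)) n
      _ = (t - t') * ((A * ω + B) * bdDensity c 0) := by
          rw [intervalIntegral.integral_const, smul_eq_mul]
  refine squeeze_zero_norm (fun N => ?_) hsum.tendsto_atTop_zero
  exact (intervalIntegral.norm_integral_le_integral_norm htt).trans_eq (by simp)

theorem tailDensity_sub_eq_integral (hsol : IsBDSolution a b c)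
    (ha : ∀ i, 1 ≤ i → |a i| ≤ A * i) (hb : ∀ i, 2 ≤ i → |b i| ≤ B * i) (hj : 1 ≤ j) {t' : ℝ}
    (ht' : 0 ≤ t') (htt : t' ≤ t) :
    tailDensity c (j + 1) t - tailDensity c (j + 1) t' = ∫ s in t'..t, bdFlux a b c j s := by
  have hI : Icc t' t ⊆ Ici 0 := fun s hs => ht'.trans hs.1
  have hint : ∀ k, 1 ≤ k → IntervalIntegrable (bdFlux a b c k) MeasureTheory.volume t' t :=
    fun k hk => ((hsol.continuousOn_bdFlux hk).mono (uIcc_of_le htt ▸ hI)).intervalIntegrable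
  set S : ℕ → ℝ → ℝ := fun N u => ∑ i ∈ Finset.range N, c (j + i + 1) u
  have hS : ∀ u, 0 ≤ u → Tendsto (fun N => S N u) atTop (𝓝 (tailDensity c (j + 1) u)) :=
    fun u hu => by
      simpa only [S, tailDensity, add_right_comm j 1] using
        (hsol.summable_tail hu (j := j + 1) (by omega)).hasSum.tendsto_sum_nat
  have hFTC : ∀ N, S N t - S N t' =
      (∫ s in t'..t, bdFlux a b c j s) - ∫ s in t'..t, bdFlux a b c (j + N) s := fun N => by
    rw [← intervalIntegral.integral_sub (hint j hj) (hint _ (by omega))]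
    refine (intervalIntegral.integral_eq_sub_of_hasDeriv_right_of_le htt
      (fun u hu => (hsol.hasDerivWithinAt_sum_range hj (hI hu) N).continuousWithinAt.mono hI)
      (fun u hu => ?_) ((hint j hj).sub (hint _ (by omega)))).symm
    exact ((hsol.hasDerivWithinAt_sum_range hj (ht'.trans hu.1.le) N).hasDerivAt
      (Ici_mem_nhds (ht'.trans_lt hu.1))).hasDerivWithinAt
  refine tendsto_nhds_unique ((hS t (ht'.trans htt)).sub (hS t' ht')) ?_
  simpa [hFTC] using tendsto_const_nhds.sub (hsol.tendsto_integral_bdFlux ha hb hj ht' htt)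

theorem hasDerivWithinAt_tailDensity (hsol : IsBDSolution a b c)
    (ha : ∀ i, 1 ≤ i → |a i| ≤ A * i) (hb : ∀ i, 2 ≤ i → |b i| ≤ B * i) (hj : 1 ≤ j)
    (ht : 0 ≤ t) :
    HasDerivWithinAt (tailDensity c (j + 1)) (bdFlux a b c j t) (Ici 0) t := by
  have hW := hsol.continuousOn_bdFlux (a := a) (b := b) hj
  have hI : Icc 0 (t + 1) ⊆ Ici 0 := Icc_subset_Ici_self
  have : Fact (t ∈ Icc 0 (t + 1)) := ⟨⟨ht, by linarith⟩⟩
  have hprim : HasDerivWithinAt (fun s => ∫ x in 0..s, bdFlux a b c j x) (bdFlux a b c j t)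
      (Icc 0 (t + 1)) t :=
    intervalIntegral.integral_hasDerivWithinAt_right
      ((hW.mono (uIcc_of_le ht ▸ Icc_subset_Ici_self)).intervalIntegrable)
      ((hW.mono hI).stronglyMeasurableAtFilter_nhdsWithin measurableSet_Icc t)
      ((hW t ht).mono hI)
  have hnhds : Icc 0 (t + 1) ∈ 𝓝[Ici 0] t := inter_mem_nhdsWithin _ (Iic_mem_nhds (by linarith))
  refine ((hprim.const_add (tailDensity c (j + 1) 0)).mono_of_mem_nhdsWithin hnhds).congr_of_mem
    (fun s hs => ?_) ht
  rw [← hsol.tailDensity_sub_eq_integral ha hb hj le_rfl hs]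
  ring

theorem bdFlux_nonpos (hsol : IsBDSolution a b c) {r : ℕ → ℝ} {ω : ℝ} {k : ℕ} (hk : 1 ≤ k)
    (ht : 0 ≤ t) (ha : 0 ≤ a k) (hb : 0 ≤ b (k + 1)) (hω : 0 ≤ ω) (hc1 : c 1 t ≤ ω)
    (hsuper : a k * ω * (r k - r (k + 1)) + b (k + 1) * (r (k + 2) - r (k + 1)) ≤ 0)
    (hleft : tailDensity c k t - r k ≤ tailDensity c (k + 1) t - r (k + 1))
    (hright : tailDensity c (k + 2) t - r (k + 2) ≤ tailDensity c (k + 1) t - r (k + 1)) :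
    bdFlux a b c k t ≤ 0 := by
  have hck : c k t = tailDensity c k t - tailDensity c (k + 1) t := by
    linarith [hsol.tailDensity_eq_add ht hk]
  have hck' : c (k + 1) t = tailDensity c (k + 1) t - tailDensity c (k + 2) t := by
    linarith [hsol.tailDensity_eq_add ht (j := k + 1) (by omega)]
  have hcoag : a k * c 1 t * c k t ≤ a k * ω * c k t := by
    have := hsol.nonneg k hk t ht
    gcongr
  have h₁ : a k * ω * ((tailDensity c k t - r k) - (tailDensity c (k + 1) t - r (k + 1))) ≤ 0 :=
    mul_nonpos_of_nonneg_of_nonpos (mul_nonneg ha hω) (by linarith)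
  have h₂ : b (k + 1) * ((tailDensity c (k + 2) t - r (k + 2))
      - (tailDensity c (k + 1) t - r (k + 1))) ≤ 0 :=
    mul_nonpos_of_nonneg_of_nonpos hb (by linarith)
  rw [hck] at hcoag
  rw [bdFlux, hck, hck']
  linarith

end IsBDSolution

theorem BDH1.exists_le_mul {a : ℕ → ℝ} {γ : ℝ} (h : BDH1 a γ) :
    ∃ A : ℝ, ∀ i : ℕ, 1 ≤ i → a i ≤ A * i := by
  rcases h with ⟨-, hγ, A, hA, ha⟩ | ⟨-, _, A, -, -, ha⟩
  · refine ⟨A, fun i hi => (ha i hi).trans ?_⟩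
    have hi : (1 : ℝ) ≤ i := by exact_mod_cast hi
    gcongr
    simpa using Real.rpow_le_rpow_of_exponent_le hi hγ.le
  · exact ⟨A, fun i hi => (ha i hi).2⟩

theorem maximum_principle_tail_density_general
    (a b : ℕ → ℝ) (γ : ℝ) (c : ℕ → ℝ → ℝ) (ρ : ℝ)
    (hapos : ∀ i : ℕ, 1 ≤ i → 0 < a i)
    (hbpos : ∀ i : ℕ, 2 ≤ i → 0 < b i)
    (hH1 : BDH1 a γ)
    (hH2 : ∃ bbar : ℝ, 0 < bbar ∧ ∀ i : ℕ, 1 ≤ i → b i ≤ bbar * a i)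
    (hsol : IsBDSolution a b c)
    (hρ : ρ = ∑' i : ℕ, ((i : ℝ) + 1) * c (i + 1) 0)
    (ω t₀ t₁ : ℝ) (hω : 0 < ω) (ht₀ : 0 ≤ t₀)
    (hc1 : ∀ t ∈ Set.Icc t₀ t₁, c 1 t ≤ ω)
    (r : ℕ → ℝ) (hr : IsSupersolution a b ω ρ r)
    (hinit : ∀ j : ℕ, 1 ≤ j → tailDensity c j t₀ ≤ r j) :
    ∀ t ∈ Set.Icc t₀ t₁, ∀ j : ℕ, 1 ≤ j → tailDensity c j t ≤ r j := by
  obtain ⟨hr₀, hrρ, hrsuper⟩ := hr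
  obtain ⟨A, hA⟩ := hH1.exists_le_mul
  obtain ⟨bbar, hbbar, hba⟩ := hH2
  have ha : ∀ i, 1 ≤ i → |a i| ≤ A * i := fun i hi =>
    (abs_of_pos (hapos i hi)).trans_le (hA i hi)
  have hb : ∀ i, 2 ≤ i → |b i| ≤ bbar * A * i := fun i hi => by
    rw [abs_of_pos (hbpos i hi), mul_assoc]
    exact (hba i (by omega)).trans (mul_le_mul_of_nonneg_left (hA i (by omega)) hbbar.le)
  have hG : ∀ j, 2 ≤ j → ∀ t, 0 ≤ t →
      HasDerivWithinAt (tailDensity c j) (bdFlux a b c (j - 1) t) (Ici 0) t := by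
    intro j hj t ht
    obtain ⟨k, rfl⟩ : ∃ k, j = k + 1 := ⟨j - 1, by omega⟩
    exact hsol.hasDerivWithinAt_tailDensity ha hb (by omega) ht
  have hI : Icc t₀ t₁ ⊆ Ici 0 := fun t ht => ht₀.trans ht.1
  have hmass : ∀ j, 1 ≤ j → ∀ t ∈ Icc t₀ t₁, j * tailDensity c j t ≤ ρ := fun j hj t ht =>
    hρ ▸ hsol.mul_tailDensity_le (hI ht) hj
  suffices key : ∀ t ∈ Icc t₀ t₁, ∀ j, 1 ≤ j → tailDensity c j t - r j ≤ 0 from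
    fun t ht j hj => sub_nonpos.1 (key t ht j hj)
  refine lattice_maximum_principle (u := fun j t => tailDensity c j t - r j)
    (d := fun j t => bdFlux a b c (j - 1) t) (K := ρ) (fun j hj => sub_nonpos.2 (hinit j hj))
    (fun t ht => ?_) (fun j hj t ht => ?_) (fun j hj t ht => ?_) (fun j hj t ht => ?_)
    (fun j hj t ht hl hr => ?_)
  · have := hmass 1 le_rfl t ht
    rw [Nat.cast_one, one_mul] at this
    linarith
  · nlinarith [hmass j hj t ht, hr₀ j hj]
  · exact ((hG j hj t (hI ht)).continuousWithinAt.mono hI).sub continuousWithinAt_const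
  · have htpos : 0 < t := ht₀.trans_lt ht.1
    exact (((hG j hj t htpos.le).hasDerivAt (Ici_mem_nhds htpos)).sub_const (r j)).hasDerivWithinAt
  · obtain ⟨k, rfl⟩ : ∃ k, j = k + 1 := ⟨j - 1, by omega⟩
    simp only [Nat.add_sub_cancel] at hl ⊢
    exact hsol.bdFlux_nonpos (by omega) (hI (Ioc_subset_Icc_self ht)) (hapos k (by omega)).le
      (hbpos (k + 1) hj).le hω.le (hc1 t (Ioc_subset_Icc_self ht))
      (by simpa using hrsuper (k + 1) hj) hl hr

/-- **Maximum principle for the Becker–Döring tail density.**  Let `c` be a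
solution with non-negative initial datum, assume (H1)–(H3) and
`0 < ρ < ρ_s`.  Let `ω > 0`, `0 ≤ t₀ < t₁`, suppose `c_1(t) ≤ ω` on
`[t₀, t₁]`, and let `(r_j)` be an `(ω,ρ)`-supersolution.  If
`G_j(t₀) ≤ r_j` for all `j ≥ 1`, then `G_j(t) ≤ r_j` for all
`t ∈ [t₀, t₁]` and all `j ≥ 1`. -/
theorem maximum_principle_tail_density
    (a b Q : ℕ → ℝ) (γ zs : ℝ) (c : ℕ → ℝ → ℝ) (ρ : ℝ)
    (hapos : ∀ i : ℕ, 1 ≤ i → 0 < a i)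
    (hbpos : ∀ i : ℕ, 2 ≤ i → 0 < b i)
    (hH1 : BDH1 a γ)
    (hH2 : ∃ bbar : ℝ, 0 < bbar ∧ ∀ i : ℕ, 1 ≤ i → b i ≤ bbar * a i)
    (hQ1 : Q 1 = 1)
    (hQrec : ∀ i : ℕ, 1 ≤ i → Q (i + 1) = a i / b (i + 1) * Q i)
    (hzs : 0 < zs)
    (hH3 : Tendsto (fun i : ℕ => Q (i + 1) / Q i) atTop (𝓝 (1 / zs)))
    (hsol : IsBDSolution a b c)
    (hρ : ρ = ∑' i : ℕ, ((i : ℝ) + 1) * c (i + 1) 0)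
    (hρpos : 0 < ρ)
    (hsub : ENNReal.ofReal ρ
      < ∑' i : ℕ, ENNReal.ofReal (((i : ℝ) + 1) * Q (i + 1) * zs ^ (i + 1)))
    (ω t₀ t₁ : ℝ) (hω : 0 < ω) (ht₀ : 0 ≤ t₀) (ht₀₁ : t₀ < t₁)
    (hc1 : ∀ t ∈ Set.Icc t₀ t₁, c 1 t ≤ ω)
    (r : ℕ → ℝ) (hr : IsSupersolution a b ω ρ r)
    (hinit : ∀ j : ℕ, 1 ≤ j → tailDensity c j t₀ ≤ r j) :
    ∀ t ∈ Set.Icc t₀ t₁, ∀ j : ℕ, 1 ≤ j → tailDensity c j t ≤ r j :=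
  maximum_principle_tail_density_general a b γ c ρ hapos hbpos hH1 hH2 hsol hρ ω t₀ t₁ hω ht₀ hc1 r
    hr hinit
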